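/- arXiv:1508.02059 — 2 statements merged into one kernel-verified Lean document; each statement's English description precedes it below -/
import Mathlib

section
/- Clocks are categorical: if h is a deterministic sub-categorical dynamic on a small category C, then (Id_A)^h = Id_{A^h} for every object A and (f∘e)^h = f^h ⊙ e^h for all composable arrows, i.e., h defines a functor from C to the category of sets and relations. -/
open CategoryTheory

/-- A sub-categorical dynamic on a small category `C`, with states of type `St A`
for each object `A`. Transitions are totalized with value `∅` outside the state sets. -/
structure SubCatDyn (C : Type*) [Category C] (St : C → Type*) where
  states : ∀ A : C, Set (St A)
  trans : ∀ {A B : C}, (A ⟶ B) → St A → Set (St B)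
  mem_trans : ∀ {A B : C} (f : A ⟶ B) (a : St A), a ∈ states A → trans f a ⊆ states B
  out : ∀ {A B : C} (f : A ⟶ B) (a : St A), a ∉ states A → trans f a = ∅
  id_sub : ∀ (A : C) (a : St A), trans (𝟙 A) a ⊆ {a}
  comp_sub : ∀ {A B D : C} (e : A ⟶ B) (f : B ⟶ D) (a : St A),
      trans (e ≫ f) a ⊆ ⋃ b ∈ trans e a, trans f b

/-- Clocks are categorical: a deterministic sub-categorical dynamic satisfies
the identity and composition laws with equality, i.e. it defines a functor to
the category of sets and relations. -/
theorem clock_categorical {C : Type*} [Category C] {St : C → Type*}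
    (h : SubCatDyn C St)
    (hdet : ∀ {A B : C} (f : A ⟶ B) (t : St A), t ∈ h.states A →
        ∃ u, h.trans f t = {u}) :
    (∀ (A : C) (t : St A), t ∈ h.states A → h.trans (𝟙 A) t = {t}) ∧
    (∀ {A B D : C} (e : A ⟶ B) (f : B ⟶ D) (t : St A), t ∈ h.states A →
        h.trans (e ≫ f) t = ⋃ u ∈ h.trans e t, h.trans f u) := by
  constructor
  · intro A t ht
    obtain ⟨u, hu⟩ := hdet (𝟙 A) t ht
    have := h.id_sub A t
    rw [hu] at this ⊢
    have : u = t := this rfl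
    rw [this]
  · intro A B D e f t ht
    obtain ⟨b, hb⟩ := hdet e t ht
    have hbS : b ∈ h.states B := h.mem_trans e t ht (hb ▸ rfl)
    obtain ⟨c, hc⟩ := hdet f b hbS
    obtain ⟨u, hu⟩ := hdet (e ≫ f) t ht
    have hsub := h.comp_sub e f t
    rw [hu, hb] at hsub
    have : u ∈ ⋃ x ∈ ({b} : Set (St B)), h.trans f x := hsub rfl
    simp only [Set.mem_singleton_iff, Set.iUnion_iUnion_eq_left] at this
    rw [hc, Set.mem_singleton_iff] at this
    rw [hu, this]
    simp [hb, hc]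
end

section
/- Stability theorem, composition part: with the primo-generated multi-dynamic β of a sub-categorical dynamic family (synchronizing clock h₀ categorical, synchronizations δ_i deterministic clock dynamorphisms), for all composable arrows f : S → T, g : T → U of the synchronizing motor C₀, every parameter μ, and every a ∈ S^β: (g∘f)^{β_μ}(a) ⊆ (g^{β_μ} ⊙ f^{β_μ})(a). Specifically, if c ∈ (g∘f)^{β_μ}(a) is witnessed by a family of realizations (𝔞_i) passing through a_i and c_i, then the intermediate state b defined by b₀ = 𝔞₀(f^{h₀}(τ₀(a₀))) and b_i = 𝔞_i(δ_i(f^{h₀}(τ₀(a₀)))) for i ≠ 0 satisfies b ∈ f^{β_μ}(a) and c ∈ g^{β_μ}(b). -/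
open CategoryTheory

/-- Stability theorem, composition part: with the primo-generated multi-dynamic
β of a sub-categorical dynamic family (synchronizing clock h₀ categorical and
deterministic, encoded by its flow functions `H` with `Hcomp`; synchronizations
δ_i deterministic clock dynamorphisms), if c ∈ (g∘f)^{β_μ}(a) with witnessing
family of realizations 𝔞 ∈ rb(R)⁻¹(μ), then the intermediate state b, defined
by b_i = 𝔞_i(δ_i(f^{h₀}(τ₀(a₀)))), satisfies b ∈ f^{β_μ}(a) and
c ∈ g^{β_μ}(b). -/
theorem stability_composition_part {C₀ : Type*} [Category C₀] {Sth : C₀ → Type*}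
    (H : ∀ {A B : C₀}, (A ⟶ B) → Sth A → Sth B)   -- flow of the clock h₀
    (Hcomp : ∀ {A B D : C₀} (f : A ⟶ B) (g : B ⟶ D) (t : Sth A),
        H (f ≫ g) t = H g (H f t))                 -- h₀ categorical
    {I : Type*} (i₀ : I)
    (X : I → C₀ → Type*)       -- states of component i over Δ_i A
    (Tm : I → C₀ → Type*)      -- instants of clock h_i over Δ_i A
    (τ : ∀ (i) (A : C₀), X i A → Tm i A)           -- component datings
    (δ : ∀ (i) (A : C₀), Sth A → Tm i A)           -- synchronizations δ_i
    (τ₀ : ∀ A : C₀, X i₀ A → Sth A)                -- synchronizing dating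
    (hτ₀ : ∀ (A : C₀) (x : X i₀ A), τ i₀ A x = δ i₀ A (τ₀ A x))
    (hinj : ∀ A : C₀, Function.Injective (δ i₀ A))
    (trh : ∀ (i) {A B : C₀}, (A ⟶ B) → Tm i A → Tm i B)  -- flows of clocks h_i
    (hsync : ∀ (i) {A B : C₀} (e : A ⟶ B) (t : Sth A),
        δ i B (H e t) = trh i e (δ i A t))  -- δ_i are deterministic clock dynamorphisms
    (tr : ∀ (i) {A B : C₀}, (A ⟶ B) → X i A → Set (X i B)) -- component transitions
    (Rfam : Set (∀ (i) (A : C₀), Tm i A → Option (X i A)))  -- the fiber rb(R)⁻¹(μ)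
    (hdat : ∀ 𝔞 ∈ Rfam, ∀ (i) (A : C₀) (t : Tm i A) (x : X i A),
        𝔞 i A t = some x → τ i A x = t)
    (hflow : ∀ 𝔞 ∈ Rfam, ∀ (i) {A B : C₀} (e : A ⟶ B) (t : Tm i A) (x : X i B),
        𝔞 i B (trh i e t) = some x → ∃ y, 𝔞 i A t = some y ∧ x ∈ tr i e y)
    {S T U : C₀} (f : S ⟶ T) (g : T ⟶ U)
    (a : ∀ i, X i S) (c : ∀ i, X i U)
    (hma : ∀ i, τ i S (a i) = δ i S (τ₀ S (a i₀)))     -- a ∈ S^β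
    (hmc : ∀ i, τ i U (c i) = δ i U (τ₀ U (c i₀)))     -- c ∈ U^β
    (hclk : τ₀ U (c i₀) = H (f ≫ g) (τ₀ S (a i₀)))     -- c dated at (g∘f)^{h₀}(t₀)
    (𝔞 : ∀ (i) (A : C₀), Tm i A → Option (X i A)) (h𝔞 : 𝔞 ∈ Rfam)
    (hpa : ∀ i, 𝔞 i S (τ i S (a i)) = some (a i))      -- 𝔞_i ▷ a_i
    (hpc : ∀ i, 𝔞 i U (τ i U (c i)) = some (c i))      -- 𝔞_i ▷ c_i
    : ∃ b : ∀ i, X i T,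
        (∀ i, 𝔞 i T (δ i T (H f (τ₀ S (a i₀)))) = some (b i)) ∧  -- b_i = 𝔞_i(δ_i(t₁))
        (∀ i, τ i T (b i) = δ i T (τ₀ T (b i₀))) ∧               -- b ∈ T^β
        τ₀ T (b i₀) = H f (τ₀ S (a i₀)) ∧                        -- b dated at f^{h₀}(t₀)
        (∀ i, 𝔞 i T (τ i T (b i)) = some (b i)) ∧                -- 𝔞_i ▷ b_i
        τ₀ U (c i₀) = H g (τ₀ T (b i₀)) := by                    -- c dated at g^{h₀}(τ₀(b₀))
  set t₀ := τ₀ S (a i₀) with ht₀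
  set t₁ := H f t₀ with ht₁
  have hc' : ∀ i, 𝔞 i U (trh i g (δ i T t₁)) = some (c i) := by
    intro i
    have : trh i g (δ i T t₁) = τ i U (c i) := by
      rw [hmc i, hclk, Hcomp, ← hsync]
    rw [this]; exact hpc i
  have hex : ∀ i, ∃ y, 𝔞 i T (δ i T t₁) = some y ∧ c i ∈ tr i g y := fun i =>
    hflow 𝔞 h𝔞 i g (δ i T t₁) (c i) (hc' i)
  choose b hb _ using hex
  have hτb : ∀ i, τ i T (b i) = δ i T t₁ := fun i =>
    hdat 𝔞 h𝔞 i T (δ i T t₁) (b i) (hb i)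
  have hτ₀b : τ₀ T (b i₀) = t₁ := by
    apply hinj T
    rw [← hτ₀, hτb]
  refine ⟨b, hb, ?_, hτ₀b, ?_, ?_⟩
  · intro i; rw [hτb, hτ₀b]
  · intro i; rw [hτb]; exact hb i
  · rw [hτ₀b, hclk, Hcomp]
end
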